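/- Let K ≥ 2. Then H^1(Asym(σ_K)) = +∞, H^2(Prox(σ_K)) = H^2(LY(σ_K)) = 1, and H^2(Dist(σ_K)) = 0, where these are subsets of Σ_K × Σ_K. -/

import Mathlib

open Filter Set MeasureTheory Topology TopologicalSpace

noncomputable section

/-- The symbolic space `Σ_K` on `K` symbols: sequences `ℕ → Fin K`. -/
def SymbSp (K : ℕ) : Type := ℕ → Fin K

namespace SymbSp

variable {K : ℕ}

theorem exists_ne {x y : SymbSp K} (h : ¬x = y) : ∃ i, x i ≠ y i := by
  by_contra hc
  push_neg at hc
  exact h (funext hc)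

instance decNe (x y : SymbSp K) : DecidablePred fun n => x n ≠ y n :=
  fun n => inferInstanceAs (Decidable (¬ (x n : Fin K) = y n))

open Classical in
/-- The metric `ρ(x,y) = K^{-δ(x,y)}` on `Σ_K`. -/
def sdist (x y : SymbSp K) : ℝ :=
  if h : x = y then 0 else ((K : ℝ))⁻¹ ^ Nat.find (exists_ne h)

theorem sdist_self (x : SymbSp K) : sdist x x = 0 := by
  unfold sdist
  exact dif_pos rfl

theorem sdist_eq {x y : SymbSp K} (h : ¬x = y) :
    sdist x y = ((K : ℝ))⁻¹ ^ Nat.find (exists_ne h) := by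
  unfold sdist
  exact dif_neg h

theorem sdist_nonneg' (x y : SymbSp K) : 0 ≤ sdist x y := by
  unfold sdist
  split
  · exact le_rfl
  · positivity

theorem inv_cast_le_one (K : ℕ) : ((K : ℝ))⁻¹ ≤ 1 := by
  rcases Nat.eq_zero_or_pos K with h | h
  · simp [h]
  · exact inv_le_one_of_one_le₀ (by exact_mod_cast h)

theorem eq_of_lt_find {x y : SymbSp K} (h : ¬x = y) {i : ℕ}
    (hi : i < Nat.find (exists_ne h)) : x i = y i :=
  not_not.mp (Nat.find_min (exists_ne h) hi)

theorem sdist_le_of_agree {x y : SymbSp K} {n : ℕ} (h : ∀ i < n, x i = y i) :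
    sdist x y ≤ ((K : ℝ))⁻¹ ^ n := by
  by_cases hxy : x = y
  · rw [hxy, sdist_self]; positivity
  · rw [sdist_eq hxy]
    apply pow_le_pow_of_le_one (by positivity) (inv_cast_le_one K)
    rw [Nat.le_find_iff]
    intro m hm
    simp only [ne_eq, not_not]
    exact h m hm

theorem sdist_comm (x y :  SymbSp K) : sdist x y = sdist y x := by
  by_cases h : x = y
  · rw [h]
  · rw [sdist_eq h, sdist_eq (fun hyx => h hyx.symm)]
    congr 1
    exact le_antisymm (Nat.find_mono fun n hn => hn.symm)
      (Nat.find_mono fun n hn => hn.symm)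

theorem sdist_le_max (x y z : SymbSp K) : sdist x z ≤ max (sdist x y) (sdist y z) := by
  by_cases hxz : x = z
  · rw [hxz, sdist_self]
    exact le_max_of_le_left (sdist_nonneg' _ _)
  by_cases hxy : x = y
  · rw [hxy]; exact le_max_right _ _
  by_cases hyz : y = z
  · rw [← hyz]; exact le_max_left _ _
  rcases le_total (Nat.find (exists_ne hxy)) (Nat.find (exists_ne hyz)) with hle | hle
  · refine le_max_of_le_left ?_
    rw [sdist_eq hxy]
    exact sdist_le_of_agree fun i hi =>
      (eq_of_lt_find hxy hi).trans (eq_of_lt_find hyz (lt_of_lt_of_le hi hle))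
  · refine le_max_of_le_right ?_
    rw [sdist_eq hyz]
    exact sdist_le_of_agree fun i hi =>
      (eq_of_lt_find hxy (lt_of_lt_of_le hi hle)).trans (eq_of_lt_find hyz hi)

theorem eq_of_sdist_eq_zero {x y : SymbSp K} (h : sdist x y = 0) : x = y := by
  by_contra hxy
  rw [sdist_eq hxy] at h
  have hK : (0 : ℝ) < (K : ℝ) := by exact_mod_cast Fin.pos (x 0)
  exact absurd h (ne_of_gt (pow_pos (inv_pos.mpr hK) _))

instance : MetricSpace (SymbSp K) where
  dist := sdist
  dist_self := sdist_self
  dist_comm := sdist_comm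
  dist_triangle x y z :=
    (sdist_le_max x y z).trans (max_le_add_of_nonneg (sdist_nonneg' _ _) (sdist_nonneg' _ _))
  eq_of_dist_eq_zero := fun h => eq_of_sdist_eq_zero h

instance : MeasurableSpace (SymbSp K) := borel _

instance : BorelSpace (SymbSp K) := ⟨rfl⟩

instance : SeparableSpace (SymbSp K) := by
  obtain hK | hK | hK : K = 0 ∨ K = 1 ∨ 2 ≤ K := by omega
  · subst hK
    haveI : IsEmpty (SymbSp 0) := ⟨fun x => (x 0).elim0⟩
    exact ⟨⟨Set.univ, Set.countable_univ, dense_univ⟩⟩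
  · subst hK
    haveI : Subsingleton (SymbSp 1) := ⟨fun x y => funext fun i => Subsingleton.elim _ _⟩
    exact ⟨⟨Set.univ, Set.countable_univ, dense_univ⟩⟩
  · refine ⟨⟨Set.range (fun w : (Σ n : ℕ, (Fin n → Fin K)) =>
      (fun i => if h : i < w.1 then w.2 ⟨i, h⟩ else ⟨0, by omega⟩ : SymbSp K)),
      Set.countable_range _, ?_⟩⟩
    rw [Metric.dense_iff]
    intro x r hr
    obtain ⟨n, hn⟩ : ∃ n : ℕ, ((K : ℝ))⁻¹ ^ n < r :=
      exists_pow_lt_of_lt_one hr (inv_lt_one_of_one_lt₀ (by exact_mod_cast hK))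
    refine ⟨(fun i => if h : i < n then x i else ⟨0, by omega⟩ : SymbSp K),
      ?_, ⟨⟨n, fun j => x j⟩, rfl⟩⟩
    refine Metric.mem_ball.mpr ?_
    exact lt_of_le_of_lt (sdist_le_of_agree fun i hi => dif_pos hi) hn

instance : SecondCountableTopology (SymbSp K) :=
  UniformSpace.secondCountable_of_separable _

end SymbSp

/-- The shift map `σ_K` on `Σ_K`. -/
def shift (K : ℕ) : SymbSp K → SymbSp K := fun x i => x (i + 1)

end
/-- The set of asymptotic pairs of `σ_K`. -/
def AsymSet (K : ℕ) : Set (SymbSp K × SymbSp K) :=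
  {z | Filter.Tendsto (fun i : ℕ => dist ((shift K)^[i] z.1) ((shift K)^[i] z.2))
        Filter.atTop (nhds 0)}

/-- The set of proximal pairs of `σ_K`. -/
def ProxSet (K : ℕ) : Set (SymbSp K × SymbSp K) :=
  {z | Filter.liminf (fun i : ℕ => dist ((shift K)^[i] z.1) ((shift K)^[i] z.2))
        Filter.atTop = 0}

/-- The set of distal pairs of `σ_K`. -/
def DistSet (K : ℕ) : Set (SymbSp K × SymbSp K) :=
  {z | 0 < Filter.liminf (fun i : ℕ => dist ((shift K)^[i] z.1) ((shift K)^[i] z.2))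
        Filter.atTop}

/-- The set of Li–Yorke pairs of `σ_K`: proximal but not asymptotic pairs. -/
def LYset (K : ℕ) : Set (SymbSp K × SymbSp K) := ProxSet K \ AsymSet K

/-!
The pair-cylinders of length `L` in `Σ_K × Σ_K` are `K^{2L}` sets of diameter `K^{-L}`, so
`H²(Σ_K × Σ_K) ≤ 1`; base-`K` expansion in each factor is a 1-Lipschitz map onto `[0,1]²`, so
`H²(Σ_K × Σ_K) ≥ 1`. An asymptotic pair agrees from some coordinate `N` on, and a distal pair
disagrees somewhere in every window of some fixed length beyond some `N`. In both cases each of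
the `n` consecutive blocks of length `M` after `N` avoids at least one of the `K^{2M}` pair-words,
so cylinder covers have `H²`-mass at most `(1 - K^{-2M})^n → 0`. Hence `Prox = Distᶜ` and
`LY = Prox \ Asym` have `H²`-measure `1`. Finally, the sets of pairs differing exactly at
coordinate `n` are disjoint, consist of asymptotic pairs, and are mapped onto `[0,1]` by the
1-Lipschitz map `(x, y) ↦ 0.x₀x₁…`, so each has `H¹`-measure at least `1`.
-/

open scoped ENNReal

theorem shift_iterate_apply {K : ℕ} (i j : ℕ) (x : SymbSp K) :
    (shift K)^[i] x j = x (j + i) := by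
  induction i generalizing x with
  | zero => rfl
  | succ i ih => rw [Function.iterate_succ_apply, ih]; rfl

section LowerBound

variable {X : Type*} [EMetricSpace X] [MeasurableSpace X] [BorelSpace X]

theorem one_le_hausdorffMeasure_one_of_surjOn_Icc {f : X → ℝ} (hf : LipschitzWith 1 f)
    {s : Set X} (hs : SurjOn f s (Icc 0 1)) : 1 ≤ μH[1] s :=
  calc (1 : ℝ≥0∞) = volume (Icc (0 : ℝ) 1) := by simp
    _ ≤ μH[1] (f '' s) := by rw [hausdorffMeasure_real]; exact measure_mono hs
    _ ≤ μH[1] s := by simpa using hf.hausdorffMeasure_image_le zero_le_one s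

theorem one_le_hausdorffMeasure_two_of_surjOn_Icc_prod {f : X → ℝ × ℝ}
    (hf : LipschitzWith 1 f) {s : Set X} (hs : SurjOn f s (Icc 0 1 ×ˢ Icc 0 1)) : 1 ≤ μH[2] s :=
  calc (1 : ℝ≥0∞) = volume (Icc (0 : ℝ) 1 ×ˢ Icc (0 : ℝ) 1) := by
        rw [Measure.volume_eq_prod, Measure.prod_prod]; simp
    _ ≤ μH[2] (f '' s) := by rw [hausdorffMeasure_prod_real]; exact measure_mono hs
    _ ≤ μH[2] s := by simpa using hf.hausdorffMeasure_image_le zero_le_two s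

end LowerBound

namespace SymbSp

variable {K : ℕ}

theorem dist_le_one (x y : SymbSp K) : dist x y ≤ 1 :=
  (sdist_le_of_agree (n := 0) fun _ h => absurd h (Nat.not_lt_zero _)).trans_eq (pow_zero _)

theorem inv_cast_lt_one (hK : 2 ≤ K) : (K : ℝ)⁻¹ < 1 :=
  inv_lt_one_of_one_lt₀ (Nat.one_lt_cast.mpr hK)

theorem pow_le_dist_iff (hK : 2 ≤ K) {x y : SymbSp K} {n : ℕ} :
    (K : ℝ)⁻¹ ^ n ≤ dist x y ↔ ∃ i ≤ n, x i ≠ y i := by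
  have hK₀ : (0 : ℝ) < (K : ℝ)⁻¹ := by positivity
  constructor
  · intro h
    by_contra! hagree
    have := (sdist_le_of_agree (n := n + 1) fun i hi => hagree i (Nat.lt_succ_iff.mp hi)).trans_lt
      (pow_lt_pow_right_of_lt_one₀ hK₀ (inv_cast_lt_one hK) n.lt_succ_self)
    exact this.not_ge h
  · rintro ⟨i, hin, hi⟩
    have hxy : x ≠ y := fun h => hi (h ▸ rfl)
    refine le_of_le_of_eq ?_ (sdist_eq hxy).symm
    exact pow_le_pow_of_le_one hK₀.le (inv_cast_lt_one hK).le
      ((Nat.find_min' (exists_ne hxy) hi).trans hin)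

theorem continuous_coord (hK : 2 ≤ K) (i : ℕ) : Continuous fun x : SymbSp K => x i := by
  refine continuous_discrete_rng.mpr fun a => Metric.isOpen_iff.mpr fun x hx => ?_
  refine ⟨(K : ℝ)⁻¹ ^ i, by positivity, fun y hy => ?_⟩
  by_contra hya
  exact (Metric.mem_ball.mp hy).not_ge
    ((pow_le_dist_iff hK).mpr ⟨i, le_rfl, fun h => hya (h.trans hx)⟩)

theorem lipschitzWith_ofDigits : LipschitzWith 1 fun x : SymbSp K => Real.ofDigits x := by
  refine LipschitzWith.of_dist_le_mul fun x y => ?_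
  rw [NNReal.coe_one, one_mul, Real.dist_eq]
  by_cases hxy : x = y
  · simp [hxy]
  rw [show dist x y = _ from sdist_eq hxy, inv_pow]
  exact Real.abs_ofDigits_sub_ofDigits_le fun i hi => eq_of_lt_find hxy hi

def pairPrefix (L : ℕ) (z : SymbSp K × SymbSp K) : Fin L → Fin K × Fin K :=
  fun i => (z.1 i, z.2 i)

theorem edist_le_of_pairPrefix_eq {L : ℕ} {z w : SymbSp K × SymbSp K}
    (h : pairPrefix L z = pairPrefix L w) : edist z w ≤ ENNReal.ofReal ((K : ℝ)⁻¹ ^ L) := by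
  have hagree : ∀ i < L, z.1 i = w.1 i ∧ z.2 i = w.2 i := fun i hi =>
    Prod.ext_iff.mp (congrFun h ⟨i, hi⟩)
  rw [edist_dist, Prod.dist_eq]
  exact ENNReal.ofReal_le_ofReal (max_le (sdist_le_of_agree fun i hi => (hagree i hi).1)
    (sdist_le_of_agree fun i hi => (hagree i hi).2))

theorem hausdorffMeasure_le_of_pairPrefix_cover (hK : 2 ≤ K) {d : ℝ} (hd : 0 ≤ d)
    {s : Set (SymbSp K × SymbSp K)} {L : ℕ → ℕ} (hL : Tendsto L atTop atTop)
    {ι : ℕ → Type*} [∀ n, Fintype (ι n)] (w : ∀ n, ι n → Fin (L n) → Fin K × Fin K)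
    (hw : ∀ n, ∀ z ∈ s, ∃ i, pairPrefix (L n) z = w n i) {B : ℕ → ℝ} {A : ℝ}
    (hB : ∀ n, Fintype.card (ι n) * ((K : ℝ)⁻¹ ^ L n) ^ d ≤ B n)
    (hBA : Tendsto B atTop (𝓝 A)) :
    μH[d] s ≤ ENNReal.ofReal A := by
  have hr : Tendsto (fun n => ENNReal.ofReal ((K : ℝ)⁻¹ ^ L n)) atTop (𝓝 0) := by
    rw [← ENNReal.ofReal_zero]
    exact ENNReal.tendsto_ofReal ((tendsto_pow_atTop_nhds_zero_of_lt_one (by positivity)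
      (inv_cast_lt_one hK)).comp hL)
  set t : ∀ n, ι n → Set (SymbSp K × SymbSp K) := fun n i => {z | pairPrefix (L n) z = w n i}
  have ht : ∀ n i, Metric.ediam (t n i) ≤ ENNReal.ofReal ((K : ℝ)⁻¹ ^ L n) := fun n i =>
    Metric.ediam_le fun z hz z' hz' => edist_le_of_pairPrefix_eq (hz.trans hz'.symm)
  have hsum : ∀ n, ∑ i, Metric.ediam (t n i) ^ d ≤ ENNReal.ofReal (B n) := fun n =>
    calc ∑ i, Metric.ediam (t n i) ^ d
        ≤ ∑ _i : ι n, ENNReal.ofReal ((K : ℝ)⁻¹ ^ L n) ^ d :=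
          Finset.sum_le_sum fun i _ => ENNReal.rpow_le_rpow (ht n i) hd
      _ = ENNReal.ofReal (Fintype.card (ι n) * ((K : ℝ)⁻¹ ^ L n) ^ d) := by
          rw [Finset.sum_const, nsmul_eq_mul, Finset.card_univ, ENNReal.ofReal_mul (by positivity),
            ENNReal.ofReal_natCast, ENNReal.ofReal_rpow_of_nonneg (by positivity) hd]
      _ ≤ ENNReal.ofReal (B n) := ENNReal.ofReal_le_ofReal (hB n)
  calc μH[d] s ≤ liminf (fun n => ∑ i, Metric.ediam (t n i) ^ d) atTop :=
        Measure.hausdorffMeasure_le_liminf_sum d s _ hr t (.of_forall ht)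
          (.of_forall fun n z hz => mem_iUnion.mpr (hw n z hz))
    _ ≤ liminf (fun n => ENNReal.ofReal (B n)) atTop := liminf_le_liminf (.of_forall hsum)
    _ = ENNReal.ofReal A := (ENNReal.tendsto_ofReal hBA).liminf_eq

theorem hausdorffMeasure_two_univ_prod (hK : 2 ≤ K) :
    μH[2] (univ : Set (SymbSp K × SymbSp K)) = 1 := by
  apply le_antisymm
  · have hcover := hausdorffMeasure_le_of_pairPrefix_cover (s := univ) hK zero_le_two tendsto_id
      (fun _ => id) (fun n z _ => ⟨pairPrefix n z, rfl⟩) (B := fun _ => 1) (fun n => by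
        simp only [Fintype.card_fun, Fintype.card_prod, Fintype.card_fin, id, Real.rpow_two]
        push_cast
        refine le_of_eq ?_
        ring_nf
        rw [← mul_pow, mul_inv_cancel₀ (by positivity), one_pow]) tendsto_const_nhds
    simpa using hcover
  · have hsurj : SurjOn (fun x : SymbSp K => Real.ofDigits x) univ (Icc 0 1) :=
      Real.ofDigits_SurjOn hK
    refine one_le_hausdorffMeasure_two_of_surjOn_Icc_prod ?_
      (by simpa only [univ_prod_univ] using hsurj.prodMap hsurj)
    simpa using (lipschitzWith_ofDigits.comp LipschitzWith.prod_fst).prodMk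
      (lipschitzWith_ofDigits.comp LipschitzWith.prod_snd)

def tailAgree (K N : ℕ) : Set (SymbSp K × SymbSp K) := {z | ∀ i ≥ N, z.1 i = z.2 i}

def windowDisagree (K m N : ℕ) : Set (SymbSp K × SymbSp K) :=
  {z | ∀ i ≥ N, ∃ j ≤ m, z.1 (i + j) ≠ z.2 (i + j)}

theorem pow_le_dist_shift_iterate_iff (hK : 2 ≤ K) {x y : SymbSp K} {m i : ℕ} :
    (K : ℝ)⁻¹ ^ m ≤ dist ((shift K)^[i] x) ((shift K)^[i] y) ↔
      ∃ j ≤ m, x (i + j) ≠ y (i + j) := by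
  simp only [pow_le_dist_iff hK, shift_iterate_apply, add_comm i]

theorem asymSet_eq_iUnion_tailAgree (hK : 2 ≤ K) : AsymSet K = ⋃ N, tailAgree K N := by
  ext z
  simp only [AsymSet, tailAgree, mem_ofPred_eq, mem_iUnion]
  constructor
  · intro h
    obtain ⟨N, hN⟩ := eventually_atTop.mp (h.eventually (gt_mem_nhds zero_lt_one))
    refine ⟨N, fun i hi => ?_⟩
    by_contra hne
    exact (hN i hi).not_ge ((pow_le_dist_shift_iterate_iff hK (m := 0)).mpr ⟨0, le_rfl, hne⟩)
  · rintro ⟨N, hN⟩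
    refine tendsto_const_nhds.congr' (eventually_atTop.mpr ⟨N, fun i hi => ?_⟩)
    rw [eq_comm, dist_eq_zero]
    funext j
    rw [shift_iterate_apply, shift_iterate_apply]
    exact hN _ (hi.trans (Nat.le_add_left i j))

theorem distSet_subset_iUnion_windowDisagree (hK : 2 ≤ K) :
    DistSet K ⊆ ⋃ m, ⋃ N, windowDisagree K m N := by
  intro z hz
  obtain ⟨m, hm⟩ := exists_pow_lt_of_lt_one hz (inv_cast_lt_one hK)
  obtain ⟨N, hN⟩ := eventually_atTop.mp (eventually_lt_of_lt_liminf hm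
    (isBoundedUnder_of ⟨0, fun _ => dist_nonneg⟩))
  exact mem_iUnion₂.mpr ⟨m, N, fun i hi => (pow_le_dist_shift_iterate_iff hK).mp (hN i hi).le⟩

theorem proxSet_eq_compl_distSet : ProxSet K = (DistSet K)ᶜ := by
  ext z
  have hnonneg : 0 ≤ liminf (fun i => dist ((shift K)^[i] z.1) ((shift K)^[i] z.2)) atTop :=
    le_liminf_of_le (isBoundedUnder_of ⟨1, fun _ => dist_le_one _ _⟩).isCoboundedUnder_ge
      (.of_forall fun _ => dist_nonneg)
  simp only [ProxSet, DistSet, mem_ofPred_eq, mem_compl_iff, not_lt]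
  exact ⟨fun h => h.le, fun h => h.antisymm hnonneg⟩

theorem hausdorffMeasure_two_eq_zero_of_forall_block (hK : 2 ≤ K) {s : Set (SymbSp K × SymbSp K)}
    {N M : ℕ} (hM : 0 < M) {p : (Fin M → Fin K × Fin K) → Prop} (hp : ∃ u, ¬p u)
    (hs : ∀ z ∈ s, ∀ b : ℕ, p fun j => (z.1 (N + b * M + j), z.2 (N + b * M + j))) :
    μH[2] s = 0 := by
  classical
  have hc : Fintype.card {u // p u} < (K * K) ^ M := by
    obtain ⟨u, hu⟩ := hp
    simpa using Fintype.card_subtype_lt hu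
  let e n : Fin N ⊕ Fin n × Fin M ≃ Fin (N + n * M) :=
    (Equiv.sumCongr (Equiv.refl _) finProdFinEquiv).trans finSumFinEquiv
  have hL : Tendsto (fun n => N + n * M) atTop atTop :=
    tendsto_atTop_mono (fun n => (Nat.le_mul_of_pos_right n hM).trans (Nat.le_add_left _ N))
      tendsto_id
  have hcover := hausdorffMeasure_le_of_pairPrefix_cover (s := s) hK zero_le_two hL
    (ι := fun n => (Fin N → Fin K × Fin K) × (Fin n → {u // p u}))
    (fun n t => Sum.elim t.1 (fun q => (t.2 q.1).1 q.2) ∘ (e n).symm)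
    (fun n z hz => ⟨(pairPrefix N z, fun b => ⟨_, hs z hz b⟩), by
      funext i
      obtain ⟨q, rfl⟩ := (e n).surjective i
      rcases q with a | ⟨b, j⟩
      · simp [e, pairPrefix]
      · simp [e, pairPrefix, Nat.mul_comm M, Nat.add_assoc, Nat.add_comm (j : ℕ)]⟩)
    (B := fun n => ((Fintype.card {u // p u} : ℝ) / ((K : ℝ) * K) ^ M) ^ n) (fun n => by
      simp only [Fintype.card_prod, Fintype.card_fun, Fintype.card_fin, Real.rpow_two]
      push_cast
      have hK₀ : (K : ℝ) ≠ 0 := by positivity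
      refine le_of_eq ?_
      calc _ = ((K : ℝ) * K * ((K : ℝ)⁻¹ * (K : ℝ)⁻¹)) ^ N *
            ((Fintype.card {u // p u} : ℝ) / ((K : ℝ) * K) ^ M) ^ n := by ring
        _ = _ := by
          rw [show (K : ℝ) * K * ((K : ℝ)⁻¹ * (K : ℝ)⁻¹) = 1 by field_simp, one_pow,
            one_mul])
    (tendsto_pow_atTop_nhds_zero_of_lt_one (by positivity)
      ((div_lt_one (by positivity)).mpr (by exact_mod_cast hc)))
  simpa using hcover

theorem hausdorffMeasure_two_tailAgree (hK : 2 ≤ K) (N : ℕ) : μH[2] (tailAgree K N) = 0 :=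
  hausdorffMeasure_two_eq_zero_of_forall_block hK (M := 1) one_pos (p := fun u => (u 0).1 = (u 0).2)
    ⟨fun _ => (⟨0, by omega⟩, ⟨1, by omega⟩), by simp⟩
    fun _ hz b => hz (N + b * 1 + 0) (by omega)

theorem hausdorffMeasure_two_windowDisagree (hK : 2 ≤ K) (m N : ℕ) :
    μH[2] (windowDisagree K m N) = 0 :=
  hausdorffMeasure_two_eq_zero_of_forall_block hK m.succ_pos
    (p := fun u => ∃ j, (u j).1 ≠ (u j).2)
    ⟨fun _ => (⟨0, by omega⟩, ⟨0, by omega⟩), by simp⟩ fun _ hz b => by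
      obtain ⟨j, hj, hne⟩ := hz (N + b * (m + 1)) (Nat.le_add_right _ _)
      exact ⟨⟨j, Nat.lt_succ_of_le hj⟩, hne⟩

theorem hausdorffMeasure_one_asymSet (hK : 2 ≤ K) : μH[1] (AsymSet K) = ⊤ := by
  let S : ℕ → Set (SymbSp K × SymbSp K) := fun n => {z | ∀ i, z.1 i = z.2 i ↔ i ≠ n}
  have hS_asym : ⋃ n, S n ⊆ AsymSet K := by
    rw [asymSet_eq_iUnion_tailAgree hK]
    exact iUnion_subset fun n z hz => mem_iUnion.mpr ⟨n + 1, fun i hi => (hz i).mpr (by omega)⟩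
  have hS_meas : ∀ n, MeasurableSet (S n) := fun n => by
    simp only [S, ofPred_forall]
    exact MeasurableSet.iInter fun i =>
      measurableSet_setOfPred.mpr (Measurable.iff (measurableSet_setOfPred.mp (measurableSet_eq_fun
        ((continuous_coord hK i).measurable.comp measurable_fst)
        ((continuous_coord hK i).measurable.comp measurable_snd))) measurable_const)
  have hS_disj : Pairwise (Function.onFun Disjoint S) := fun n n' hnn' =>
    disjoint_left.mpr fun z hz hz' => (hz n).mp ((hz' n).mpr hnn') rfl
  have hS_one : ∀ n, 1 ≤ μH[1] (S n) := by
    intro n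
    refine one_le_hausdorffMeasure_one_of_surjOn_Icc
      (by simpa using lipschitzWith_ofDigits.comp LipschitzWith.prod_fst) fun t ht => ?_
    obtain ⟨x, -, hx⟩ := Real.ofDigits_SurjOn hK ht
    have : Nontrivial (Fin K) := Fin.nontrivial_iff_two_le.mpr hK
    obtain ⟨a, ha⟩ := _root_.exists_ne (x n)
    refine ⟨(x, Function.update x n a), fun i => ?_, hx⟩
    by_cases hi : i = n
    · subst hi; simpa using ha.symm
    · simp [hi]
  refine top_le_iff.mp ?_
  calc ⊤ = ∑' _ : ℕ, (1 : ℝ≥0∞) :=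
        (ENNReal.tsum_const_eq_top_of_ne_zero one_ne_zero).symm
    _ ≤ ∑' n, μH[1] (S n) := ENNReal.tsum_le_tsum hS_one
    _ = μH[1] (⋃ n, S n) := (measure_iUnion hS_disj hS_meas).symm
    _ ≤ μH[1] (AsymSet K) := measure_mono hS_asym

end SymbSp

open SymbSp

/-- For `K ≥ 2`: `H¹(Asym(σ_K)) = +∞`,
`H²(Prox(σ_K)) = H²(LY(σ_K)) = 1`, and `H²(Dist(σ_K)) = 0`. -/
theorem statement_8 (K : ℕ) (hK : 2 ≤ K) :
    μH[1] (AsymSet K) = ⊤ ∧ μH[2] (ProxSet K) = 1 ∧ μH[2] (LYset K) = 1 ∧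
      μH[2] (DistSet K) = 0 := by
  have hAsym : μH[2] (AsymSet K) = 0 := by
    rw [asymSet_eq_iUnion_tailAgree hK]
    exact measure_iUnion_null (hausdorffMeasure_two_tailAgree hK)
  have hDist : μH[2] (DistSet K) = 0 :=
    measure_mono_null (distSet_subset_iUnion_windowDisagree hK)
      (measure_iUnion_null fun m => measure_iUnion_null (hausdorffMeasure_two_windowDisagree hK m))
  have hProx : μH[2] (ProxSet K) = 1 := by
    rw [proxSet_eq_compl_distSet, compl_eq_univ_sdiff, measure_sdiff_null hDist,
      hausdorffMeasure_two_univ_prod hK]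
  refine ⟨hausdorffMeasure_one_asymSet hK, hProx, ?_, hDist⟩
  rw [LYset, measure_sdiff_null hAsym, hProx]
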